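/- arXiv:2209.08086 — 2 statements merged into one kernel-verified Lean document; each statement's English description precedes it below -/
import Mathlib

section
/- Let k0 > 0, f : ℝ³ → ℝ be integrable, and R_s, R_t ∈ SO(3). Assume: (a) there is no α ∈ ℝ such that ν_{R_s}(Q(α)·k) = ν_{R_t}(k) for all k ∈ B, and no α ∈ ℝ such that ν_{R_s}(S·Q(α)·k) = ν_{R_t}(k) for all k ∈ B; (b) there exists exactly one triple (φ, θ, ψ) ∈ [0,2π) × [0,π] × [0,2π) such that ν_{R_s}(γ^{φ,θ}(β)) = ν_{R_t}(γ^{π−ψ,θ}(−β)) for all β ∈ [−π/2, π/2] and ν_{R_s}(γ^{*,φ,θ}(β)) = ν_{R_t}(γ^{*,π−ψ,θ}(β)) for all β ∈ [−π/2, π/2]. Then R_sᵀR_t = Q³(φ)·Q²(θ)·Q³(ψ) for this unique triple. -/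
noncomputable section
open Real Set MeasureTheory
open scoped RealInnerProductSpace

abbrev R3 : Type := EuclideanSpace ℝ (Fin 3)
abbrev R2 : Type := EuclideanSpace ℝ (Fin 2)
abbrev Mat3 : Type := Matrix (Fin 3) (Fin 3) ℝ

def SO3 (R : Mat3) : Prop := R.transpose * R = 1 ∧ R.det = 1

def e3 : R3 := WithLp.toLp 2 (![0, 0, 1] : Fin 3 → ℝ)

def act3 (R : Mat3) (x : R3) : R3 := WithLp.toLp 2 (R.mulVec x)

def cross3 (x y : R3) : R3 := WithLp.toLp 2 (crossProduct x y)

def rotE3 (R : Mat3) : R3 := act3 R e3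

def v1 (Rs Rt : Mat3) : R3 := ‖rotE3 Rs + rotE3 Rt‖⁻¹ • (rotE3 Rs + rotE3 Rt)

def v2 (Rs Rt : Mat3) : R3 :=
  ‖cross3 (rotE3 Rs) (rotE3 Rt)‖⁻¹ • cross3 (rotE3 Rs) (rotE3 Rt)

def v3 (Rs Rt : Mat3) : R3 := ‖rotE3 Rs - rotE3 Rt‖⁻¹ • (rotE3 Rs - rotE3 Rt)

def aRad (k0 : ℝ) (Rs Rt : Mat3) : ℝ := k0 / 2 * ‖rotE3 Rs + rotE3 Rt‖

def sigmaArc (k0 : ℝ) (Rs Rt : Mat3) (β : ℝ) : R3 :=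
  (aRad k0 Rs Rt * (Real.cos β - 1)) • v1 Rs Rt + (aRad k0 Rs Rt * Real.sin β) • v2 Rs Rt

def cST (Rs Rt : Mat3) : ℝ := ⟪rotE3 Rs, rotE3 Rt⟫

def Jset (Rs Rt : Mat3) : Set ℝ :=
  if cST Rs Rt ≤ 0 then Ioc (-π) π
  else Ioo (-(Real.arccos ((cST Rs Rt - 1) / (cST Rs Rt + 1))))
    (Real.arccos ((cST Rs Rt - 1) / (cST Rs Rt + 1)))

def kappa (k0 : ℝ) (k : R2) : ℝ := Real.sqrt (k0 ^ 2 - ‖k‖ ^ 2)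

def hmap (k0 : ℝ) (k : R2) : R3 := WithLp.toLp 2 (![k 0, k 1, kappa k0 k - k0] : Fin 3 → ℝ)

def ball2 (k0 : ℝ) : Set R2 := {k | ‖k‖ < k0}

def Hemi (k0 : ℝ) (R : Mat3) : Set R3 := (fun k => act3 R (hmap k0 k)) '' ball2 k0

def aStar (k0 : ℝ) (Rs Rt : Mat3) : ℝ := k0 / 2 * ‖rotE3 Rs - rotE3 Rt‖

def sigmaStar (k0 : ℝ) (Rs Rt : Mat3) (β : ℝ) : R3 :=
  (aStar k0 Rs Rt * (Real.cos β - 1)) • v3 Rs Rt - (aStar k0 Rs Rt * Real.sin β) • v2 Rs Rt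

def JstarSet (Rs Rt : Mat3) : Set ℝ :=
  if 0 ≤ cST Rs Rt then Ioc (-π) π
  else Ioo (-(Real.arccos ((cST Rs Rt + 1) / (cST Rs Rt - 1))))
    (Real.arccos ((cST Rs Rt + 1) / (cST Rs Rt - 1)))

def P2 (x : R3) : R2 := WithLp.toLp 2 (![x 0, x 1] : Fin 2 → ℝ)

def relAxis (Rs Rt : Mat3) : R3 := act3 (Rs.transpose * Rt) e3

def w1 (Rs Rt : Mat3) : R2 := ‖P2 (relAxis Rs Rt)‖⁻¹ • P2 (relAxis Rs Rt)

def w2 (Rs Rt : Mat3) : R2 :=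
  ‖P2 (cross3 e3 (relAxis Rs Rt))‖⁻¹ • P2 (cross3 e3 (relAxis Rs Rt))

def aTilde (k0 : ℝ) (Rs Rt : Mat3) : ℝ := k0 / 2 * ‖P2 (relAxis Rs Rt)‖

def gammaArc (k0 : ℝ) (Rs Rt : Mat3) (β : ℝ) : R2 :=
  (aTilde k0 Rs Rt * (Real.cos β - 1)) • w1 Rs Rt + (aRad k0 Rs Rt * Real.sin β) • w2 Rs Rt

def Q2mat (α : ℝ) : Mat3 :=
  !![Real.cos α, 0, Real.sin α; 0, 1, 0; -Real.sin α, 0, Real.cos α]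

def Q3mat (α : ℝ) : Mat3 :=
  !![Real.cos α, -Real.sin α, 0; Real.sin α, Real.cos α, 0; 0, 0, 1]

def gammaEuler (k0 φ θ β : ℝ) : R2 :=
  WithLp.toLp 2 ((k0 / 2 * Real.sin θ * (Real.cos β - 1)) • (![Real.cos φ, Real.sin φ] : Fin 2 → ℝ)
    + (k0 * Real.cos (θ / 2) * Real.sin β) • (![-Real.sin φ, Real.cos φ] : Fin 2 → ℝ))

def gammaStar (k0 : ℝ) (Rs Rt : Mat3) (β : ℝ) : R2 :=
  (-(aTilde k0 Rs Rt * (Real.cos β - 1))) • w1 Rs Rt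
    - (aStar k0 Rs Rt * Real.sin β) • w2 Rs Rt

def gammaStarEuler (k0 φ θ β : ℝ) : R2 :=
  WithLp.toLp 2 ((-(k0 / 2 * Real.sin θ * (Real.cos β - 1))) • (![Real.cos φ, Real.sin φ] : Fin 2 → ℝ)
    - (k0 * Real.sin (θ / 2) * Real.sin β) • (![-Real.sin φ, Real.cos φ] : Fin 2 → ℝ))

/-- The 3D Fourier transform `𝓕f(y) = (2π)^{−3/2} ∫ f(x) e^{−i⟨x,y⟩} dx`. -/
def FT (f : R3 → ℝ) (y : R3) : ℂ :=
  ((2 * π : ℝ) ^ (-(3 : ℝ) / 2) : ℝ) *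
    ∫ x : R3, (f x : ℂ) * Complex.exp (-Complex.I * (⟪x, y⟫ : ℝ))

/-- The scaled squared energy `ν_R(k) = |𝓕f(R·h(k))|²`. -/
def nu (k0 : ℝ) (f : R3 → ℝ) (R : Mat3) (k : R2) : ℝ :=
  ‖FT f (act3 R (hmap k0 k))‖ ^ 2

def rot2 (α : ℝ) : Matrix (Fin 2) (Fin 2) ℝ :=
  !![Real.cos α, -Real.sin α; Real.sin α, Real.cos α]

def act2 (Q : Matrix (Fin 2) (Fin 2) ℝ) (k : R2) : R2 := WithLp.toLp 2 (Q.mulVec k)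

def Smat : Matrix (Fin 2) (Fin 2) ℝ := !![1, 0; 0, -1]

/-- The matching property of Theorem 3.6: the triple `(φ, θ, ψ)` of Euler angles matches the
scaled squared energies along the elliptic arcs and their duals. -/
def matchProp (k0 : ℝ) (f : R3 → ℝ) (Rs Rt : Mat3) (p : ℝ × ℝ × ℝ) : Prop :=
  p.1 ∈ Ico 0 (2 * π) ∧ p.2.1 ∈ Icc 0 π ∧ p.2.2 ∈ Ico 0 (2 * π) ∧
  (∀ β ∈ Icc (-(π / 2)) (π / 2),
    nu k0 f Rs (gammaEuler k0 p.1 p.2.1 β)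
      = nu k0 f Rt (gammaEuler k0 (π - p.2.2) p.2.1 (-β))) ∧
  (∀ β ∈ Icc (-(π / 2)) (π / 2),
    nu k0 f Rs (gammaStarEuler k0 p.1 p.2.1 β)
      = nu k0 f Rt (gammaStarEuler k0 (π - p.2.2) p.2.1 β))

/-!
The relative rotation `Rsᵀ Rt` lies in SO(3), so it has Euler angles `(φ₀, θ₀, ψ₀)` in the
stated ranges, and these angles satisfy the matching property identically. Indeed `κ` is radial,
so `h(Q(α) k) = Q³(α) h(k)`, which reduces the two arcs to `φ = 0`; there
`h(γ^{0,θ}(β)) = Q²(θ) Q³(π) h(γ^{0,θ}(-β))` and `h(γ^{*,0,θ}(β)) = -Q²(θ) Q³(π) h(γ^{*,0,θ}(β))`,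
and `|𝓕f(-y)| = |𝓕f(y)|` because `f` is real. Uniqueness of the matching triple then identifies
`(φ, θ, ψ)` with `(φ₀, θ₀, ψ₀)`.
-/

theorem exists_mem_Ico_polar (z : ℂ) :
    ∃ α ∈ Ico 0 (2 * π), ‖z‖ * cos α = z.re ∧ ‖z‖ * sin α = z.im := by
  refine ⟨toIcoMod two_pi_pos 0 z.arg, by simpa using toIcoMod_mem_Ico two_pi_pos 0 z.arg, ?_, ?_⟩
  · rw [toIcoMod, zsmul_eq_mul, cos_sub_int_mul_two_pi, Complex.norm_mul_cos_arg]
  · rw [toIcoMod, zsmul_eq_mul, sin_sub_int_mul_two_pi, Complex.norm_mul_sin_arg]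

theorem act3_one (x : R3) : act3 1 x = x := by
  simp [act3]

theorem act3_mul (A B : Mat3) (x : R3) : act3 (A * B) x = act3 A (act3 B x) := by
  simp [act3, Matrix.mulVec_mulVec]

theorem act3_neg (A : Mat3) (x : R3) : act3 A (-x) = -act3 A x := by
  simp [act3, Matrix.mulVec_neg]

theorem act3_transpose_mul {R : Mat3} (hR : R.transpose * R = 1) (A : Mat3) (x : R3) :
    act3 R (act3 (R.transpose * A) x) = act3 A x := by
  rw [← act3_mul, ← Matrix.mul_assoc, mul_eq_one_comm.mp hR, Matrix.one_mul]

theorem Q3mat_add (a b : ℝ) : Q3mat (a + b) = Q3mat a * Q3mat b := by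
  ext i j
  fin_cases i <;> fin_cases j <;>
    simp [Q3mat, Matrix.mul_apply, Fin.sum_univ_three, cos_add, sin_add] <;> ring

theorem SO3.mul {A B : Mat3} (hA : SO3 A) (hB : SO3 B) : SO3 (A * B) := by
  constructor
  · rw [Matrix.transpose_mul, Matrix.mul_assoc, ← Matrix.mul_assoc A.transpose, hA.1,
      Matrix.one_mul, hB.1]
  · rw [Matrix.det_mul, hA.2, hB.2, mul_one]

theorem SO3.transpose {A : Mat3} (hA : SO3 A) : SO3 A.transpose :=
  ⟨by rw [Matrix.transpose_transpose]; exact mul_eq_one_comm.mp hA.1,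
    by rw [Matrix.det_transpose]; exact hA.2⟩

theorem SO3_Q3mat (α : ℝ) : SO3 (Q3mat α) := by
  constructor
  · ext i j
    fin_cases i <;> fin_cases j <;>
      simp [Q3mat, Matrix.mul_apply, Fin.sum_univ_three] <;> linarith [cos_sq_add_sin_sq α]
  · simp [Matrix.det_fin_three, Q3mat]; linarith [cos_sq_add_sin_sq α]

theorem SO3_Q2mat (α : ℝ) : SO3 (Q2mat α) := by
  constructor
  · ext i j
    fin_cases i <;> fin_cases j <;>
      simp [Q2mat, Matrix.mul_apply, Fin.sum_univ_three] <;> linarith [cos_sq_add_sin_sq α]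
  · simp [Matrix.det_fin_three, Q2mat]; linarith [cos_sq_add_sin_sq α]

theorem SO3.eq_Q3mat_of_act3_e3 {M : Mat3} (hM : SO3 M) (he3 : act3 M e3 = e3) :
    ∃ ψ ∈ Ico 0 (2 * π), M = Q3mat ψ := by
  have hcol (i : Fin 3) : M i 2 = e3 i := by
    simpa [act3, e3, Matrix.mulVec, dotProduct, Fin.sum_univ_three] using
      congrFun (congrArg WithLp.ofLp he3) i
  have h02 : M 0 2 = 0 := by simpa [e3] using hcol 0
  have h12 : M 1 2 = 0 := by simpa [e3] using hcol 1
  have h22 : M 2 2 = 1 := by simpa [e3] using hcol 2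
  have orth (i j : Fin 3) :
      M 0 i * M 0 j + M 1 i * M 1 j + M 2 i * M 2 j = if i = j then 1 else 0 := by
    simpa [Matrix.mul_apply, Fin.sum_univ_three, Matrix.one_apply] using
      congrFun (congrFun hM.1 i) j
  have h20 : M 2 0 = 0 := by simpa [h02, h12, h22] using orth 2 0
  have h21 : M 2 1 = 0 := by simpa [h02, h12, h22] using orth 2 1
  have h00 : M 0 0 ^ 2 + M 1 0 ^ 2 = 1 := by simpa [h20, sq] using orth 0 0
  have h01 : M 0 0 * M 0 1 + M 1 0 * M 1 1 = 0 := by simpa [h20, h21] using orth 0 1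
  have hdet : M 0 0 * M 1 1 - M 0 1 * M 1 0 = 1 := by
    simpa [Matrix.det_fin_three, h02, h12, h22, h20, h21] using hM.2
  obtain ⟨ψ, hψ, hcos, hsin⟩ := exists_mem_Ico_polar ⟨M 0 0, M 1 0⟩
  have hnorm : ‖(⟨M 0 0, M 1 0⟩ : ℂ)‖ = 1 := by
    rw [Complex.norm_def, Complex.normSq_mk, ← sq, ← sq, h00, sqrt_one]
  rw [hnorm, one_mul] at hcos hsin
  refine ⟨ψ, hψ, ?_⟩
  ext i j
  fin_cases i <;> fin_cases j <;> simp [Q3mat, h02, h12, h22, h20, h21, hcos, hsin]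
  · linear_combination (-M 0 1) * h00 + M 0 0 * h01 - M 1 0 * hdet
  · linear_combination (-M 1 1) * h00 + M 0 0 * hdet + M 1 0 * h01

theorem exists_Q3mat_mul_Q2mat_act3_e3 {v : R3} (hv : v 0 ^ 2 + v 1 ^ 2 + v 2 ^ 2 = 1) :
    ∃ φ ∈ Ico 0 (2 * π), ∃ θ ∈ Icc 0 π, act3 (Q3mat φ * Q2mat θ) e3 = v := by
  obtain ⟨φ, hφ, hcosφ, hsinφ⟩ := exists_mem_Ico_polar ⟨v 0, v 1⟩
  obtain ⟨θ, hθ, hcosθ, hsinθ⟩ :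
      ∃ θ ∈ Icc 0 π, cos θ = v 2 ∧ sin θ = ‖(⟨v 0, v 1⟩ : ℂ)‖ := by
    refine ⟨arccos (v 2), ⟨arccos_nonneg _, arccos_le_pi _⟩,
      cos_arccos (by nlinarith) (by nlinarith), ?_⟩
    rw [sin_arccos, Complex.norm_def, Complex.normSq_mk]
    congr 1
    linarith
  refine ⟨φ, hφ, θ, hθ, ?_⟩
  ext i
  fin_cases i <;>
    simp [act3, e3, Q3mat, Q2mat, hcosθ, hsinθ] <;> linarith

theorem SO3.exists_euler_angles {M : Mat3} (hM : SO3 M) :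
    ∃ φ ∈ Ico 0 (2 * π), ∃ θ ∈ Icc 0 π, ∃ ψ ∈ Ico 0 (2 * π),
      M = Q3mat φ * Q2mat θ * Q3mat ψ := by
  have hv : act3 M e3 0 ^ 2 + act3 M e3 1 ^ 2 + act3 M e3 2 ^ 2 = 1 := by
    simpa [act3, e3, Matrix.mulVec, dotProduct, Fin.sum_univ_three, Matrix.mul_apply, sq] using
      congrFun (congrFun hM.1 2) 2
  obtain ⟨φ, hφ, θ, hθ, hA⟩ := exists_Q3mat_mul_Q2mat_act3_e3 hv
  have hASO3 : SO3 (Q3mat φ * Q2mat θ) := (SO3_Q3mat φ).mul (SO3_Q2mat θ)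
  obtain ⟨ψ, hψ, hN⟩ := (hASO3.transpose.mul hM).eq_Q3mat_of_act3_e3 (by
    rw [act3_mul, ← hA, ← act3_mul, hASO3.1, act3_one])
  refine ⟨φ, hφ, θ, hθ, ψ, hψ, ?_⟩
  rw [← hN, ← Matrix.mul_assoc, mul_eq_one_comm.mp hASO3.1, Matrix.one_mul]

theorem norm_act2_rot2 (α : ℝ) (k : R2) : ‖act2 (rot2 α) k‖ = ‖k‖ := by
  simp only [EuclideanSpace.norm_eq, Fin.sum_univ_two, act2, rot2, Real.norm_eq_abs, sq_abs]
  congr 1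
  simp [Matrix.mulVec, dotProduct, Fin.sum_univ_two]
  linear_combination (k 0 ^ 2 + k 1 ^ 2) * sin_sq_add_cos_sq α

theorem hmap_act2_rot2 (k0 α : ℝ) (k : R2) :
    hmap k0 (act2 (rot2 α) k) = act3 (Q3mat α) (hmap k0 k) := by
  have hκ : kappa k0 (act2 (rot2 α) k) = kappa k0 k := by rw [kappa, kappa, norm_act2_rot2]
  simp only [hmap, hκ]
  ext i
  fin_cases i <;> simp [act2, act3, rot2, Q3mat, Matrix.vecHead, Matrix.vecTail] <;> ring

theorem gammaEuler_eq_act2_rot2 (k0 φ θ β : ℝ) :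
    gammaEuler k0 φ θ β = act2 (rot2 φ) (gammaEuler k0 0 θ β) := by
  ext i
  fin_cases i <;> simp [gammaEuler, act2, rot2]

theorem gammaStarEuler_eq_act2_rot2 (k0 φ θ β : ℝ) :
    gammaStarEuler k0 φ θ β = act2 (rot2 φ) (gammaStarEuler k0 0 θ β) := by
  ext i
  fin_cases i <;> simp [gammaStarEuler, act2, rot2]
  ring

theorem hmap_gammaEuler_zero {k0 β : ℝ} (hk0 : 0 ≤ k0) (hβ : 0 ≤ cos β) (θ : ℝ) :
    hmap k0 (gammaEuler k0 0 θ β) = (k0 * cos (θ / 2)) •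
      !₂[sin (θ / 2) * (cos β - 1), sin β, cos (θ / 2) * (cos β - 1)] := by
  obtain ⟨t, rfl⟩ : ∃ t, θ = 2 * t := ⟨θ / 2, by ring⟩
  rw [mul_div_cancel_left₀ t two_ne_zero]
  have hκ : kappa k0 (gammaEuler k0 0 (2 * t) β) = k0 * (cos t ^ 2 * cos β + sin t ^ 2) := by
    rw [kappa, EuclideanSpace.norm_eq, sq_sqrt (by positivity),
      ← sqrt_sq (by positivity : 0 ≤ k0 * (cos t ^ 2 * cos β + sin t ^ 2))]
    congr 1
    simp [gammaEuler, sin_two_mul, mul_div_cancel_left₀ t two_ne_zero]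
    linear_combination (-k0 ^ 2 * cos t ^ 2) * sin_sq_add_cos_sq β
      - k0 ^ 2 * (1 + sin t ^ 2 + cos t ^ 2 * cos β ^ 2) * sin_sq_add_cos_sq t
  rw [hmap, hκ]
  ext i
  fin_cases i <;> simp [gammaEuler, sin_two_mul]
  · ring
  · linear_combination k0 * sin_sq_add_cos_sq t

theorem hmap_gammaStarEuler_zero {k0 β : ℝ} (hk0 : 0 ≤ k0) (hβ : 0 ≤ cos β) (θ : ℝ) :
    hmap k0 (gammaStarEuler k0 0 θ β) = (k0 * sin (θ / 2)) •
      !₂[-(cos (θ / 2) * (cos β - 1)), -sin β, sin (θ / 2) * (cos β - 1)] := by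
  obtain ⟨t, rfl⟩ : ∃ t, θ = 2 * t := ⟨θ / 2, by ring⟩
  rw [mul_div_cancel_left₀ t two_ne_zero]
  have hκ : kappa k0 (gammaStarEuler k0 0 (2 * t) β) = k0 * (sin t ^ 2 * cos β + cos t ^ 2) := by
    rw [kappa, EuclideanSpace.norm_eq, sq_sqrt (by positivity),
      ← sqrt_sq (by positivity : 0 ≤ k0 * (sin t ^ 2 * cos β + cos t ^ 2))]
    congr 1
    simp [gammaStarEuler, sin_two_mul, mul_div_cancel_left₀ t two_ne_zero]
    linear_combination (-k0 ^ 2 * sin t ^ 2) * sin_sq_add_cos_sq β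
      - k0 ^ 2 * (1 + cos t ^ 2 + sin t ^ 2 * cos β ^ 2) * sin_sq_add_cos_sq t
  rw [hmap, hκ]
  ext i
  fin_cases i <;> simp [gammaStarEuler, sin_two_mul]
  · ring
  · linear_combination k0 * sin_sq_add_cos_sq t

/- `Q²(θ) Q³(π)` is the half-turn about `u = (sin (θ/2), 0, cos (θ/2))`; the lifted arc lies in
the plane spanned by `u` and `e₂`, the lifted dual arc in the plane orthogonal to `u`. -/
theorem hmap_gammaEuler_zero_eq_act3 {k0 β : ℝ} (hk0 : 0 ≤ k0) (hβ : 0 ≤ cos β) (θ : ℝ) :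
    hmap k0 (gammaEuler k0 0 θ β)
      = act3 (Q2mat θ * Q3mat π) (hmap k0 (gammaEuler k0 0 θ (-β))) := by
  rw [hmap_gammaEuler_zero hk0 hβ, hmap_gammaEuler_zero hk0 (by rwa [cos_neg])]
  obtain ⟨t, rfl⟩ : ∃ t, θ = 2 * t := ⟨θ / 2, by ring⟩
  ext i
  fin_cases i <;> simp [act3, Q2mat, Q3mat, sin_two_mul, cos_two_mul,
    mul_div_cancel_left₀ t two_ne_zero, Matrix.vecHead, Matrix.vecTail]
  · ring
  · linear_combination (-2 * k0 * cos t ^ 2 * (cos β - 1)) * sin_sq_add_cos_sq t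

theorem hmap_gammaStarEuler_zero_eq_neg_act3 {k0 β : ℝ} (hk0 : 0 ≤ k0) (hβ : 0 ≤ cos β) (θ : ℝ) :
    hmap k0 (gammaStarEuler k0 0 θ β)
      = -act3 (Q2mat θ * Q3mat π) (hmap k0 (gammaStarEuler k0 0 θ β)) := by
  rw [hmap_gammaStarEuler_zero hk0 hβ]
  obtain ⟨t, rfl⟩ : ∃ t, θ = 2 * t := ⟨θ / 2, by ring⟩
  ext i
  fin_cases i <;> simp [act3, Q2mat, Q3mat, sin_two_mul, cos_two_mul,
    mul_div_cancel_left₀ t two_ne_zero, Matrix.vecHead, Matrix.vecTail]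
  · linear_combination (2 * k0 * sin t * cos t * (cos β - 1)) * sin_sq_add_cos_sq t
  · ring

theorem hmap_gammaEuler {k0 β : ℝ} (hk0 : 0 ≤ k0) (hβ : 0 ≤ cos β) (φ θ ψ : ℝ) :
    hmap k0 (gammaEuler k0 φ θ β)
      = act3 (Q3mat φ * Q2mat θ * Q3mat ψ) (hmap k0 (gammaEuler k0 (π - ψ) θ (-β))) := by
  rw [gammaEuler_eq_act2_rot2 k0 φ, gammaEuler_eq_act2_rot2 k0 (π - ψ), hmap_act2_rot2,
    hmap_act2_rot2, hmap_gammaEuler_zero_eq_act3 hk0 hβ, ← act3_mul, ← act3_mul,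
    Matrix.mul_assoc _ (Q3mat ψ), ← Q3mat_add, add_sub_cancel, Matrix.mul_assoc]

theorem hmap_gammaStarEuler {k0 β : ℝ} (hk0 : 0 ≤ k0) (hβ : 0 ≤ cos β) (φ θ ψ : ℝ) :
    hmap k0 (gammaStarEuler k0 φ θ β)
      = -act3 (Q3mat φ * Q2mat θ * Q3mat ψ) (hmap k0 (gammaStarEuler k0 (π - ψ) θ β)) := by
  rw [gammaStarEuler_eq_act2_rot2 k0 φ, gammaStarEuler_eq_act2_rot2 k0 (π - ψ), hmap_act2_rot2,
    hmap_act2_rot2]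
  conv_lhs => rw [hmap_gammaStarEuler_zero_eq_neg_act3 hk0 hβ]
  rw [act3_neg, ← act3_mul, ← act3_mul, Matrix.mul_assoc _ (Q3mat ψ), ← Q3mat_add,
    add_sub_cancel, Matrix.mul_assoc]

theorem norm_FT_neg (f : R3 → ℝ) (y : R3) : ‖FT f (-y)‖ = ‖FT f y‖ := by
  have hconj : FT f (-y) = (starRingEnd ℂ) (FT f y) := by
    rw [FT, FT, map_mul, ← integral_conj, Complex.conj_ofReal]
    congr 2
    funext x
    rw [map_mul, Complex.conj_ofReal, ← Complex.exp_conj, map_mul, map_neg, Complex.conj_I,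
      Complex.conj_ofReal, inner_neg_right]
    push_cast
    ring_nf
  rw [hconj, Complex.norm_conj]

theorem matchProp_of_euler_angles {k0 : ℝ} (hk0 : 0 ≤ k0) (f : R3 → ℝ) {Rs Rt : Mat3}
    (hRs : Rs.transpose * Rs = 1) {φ θ ψ : ℝ} (hφ : φ ∈ Ico 0 (2 * π)) (hθ : θ ∈ Icc 0 π)
    (hψ : ψ ∈ Ico 0 (2 * π)) (h : Rs.transpose * Rt = Q3mat φ * Q2mat θ * Q3mat ψ) :
    matchProp k0 f Rs Rt (φ, θ, ψ) := by
  refine ⟨hφ, hθ, hψ, fun β hβ => ?_, fun β hβ => ?_⟩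
  · rw [nu, nu, hmap_gammaEuler hk0 (cos_nonneg_of_mem_Icc hβ), ← h, act3_transpose_mul hRs]
  · rw [nu, nu, hmap_gammaStarEuler hk0 (cos_nonneg_of_mem_Icc hβ), ← h, act3_neg,
      act3_transpose_mul hRs, norm_FT_neg]

theorem reconstruction_euler_angles_general (k0 : ℝ) (hk0 : 0 < k0) (f : R3 → ℝ)
    (Rs Rt : Mat3) (hRs : SO3 Rs) (hRt : SO3 Rt)
    (hexu : ∃! p : ℝ × ℝ × ℝ, matchProp k0 f Rs Rt p)
    (φ θ ψ : ℝ) (hp : matchProp k0 f Rs Rt (φ, θ, ψ)) :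
    Rs.transpose * Rt = Q3mat φ * Q2mat θ * Q3mat ψ := by
  obtain ⟨φ₀, hφ₀, θ₀, hθ₀, ψ₀, hψ₀, heuler⟩ := (hRs.transpose.mul hRt).exists_euler_angles
  have hmatch := matchProp_of_euler_angles hk0.le f hRs.1 hφ₀ hθ₀ hψ₀ heuler
  obtain ⟨rfl, rfl, rfl⟩ : φ = φ₀ ∧ θ = θ₀ ∧ ψ = ψ₀ := by
    simpa only [Prod.mk.injEq] using hexu.unique hp hmatch
  exact heuler

/-- Theorem: reconstruction of Euler angles.
Assume neither degenerate relation `ν_{Rs}(Q(α)·k) = ν_{Rt}(k)` nor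
`ν_{Rs}(S·Q(α)·k) = ν_{Rt}(k)` holds for any `α`, and that there is exactly one triple
`(φ, θ, ψ) ∈ [0,2π) × [0,π] × [0,2π)` matching the data along the elliptic arcs and their
duals.  Then `Rsᵀ Rt = Q³(φ)·Q²(θ)·Q³(ψ)` for this unique triple. -/
theorem reconstruction_euler_angles (k0 : ℝ) (hk0 : 0 < k0) (f : R3 → ℝ)
    (hf : MeasureTheory.Integrable f) (Rs Rt : Mat3) (hRs : SO3 Rs) (hRt : SO3 Rt)
    (hnotplus : ¬ ∃ α : ℝ, ∀ k ∈ ball2 k0, nu k0 f Rs (act2 (rot2 α) k) = nu k0 f Rt k)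
    (hnotminus : ¬ ∃ α : ℝ, ∀ k ∈ ball2 k0, nu k0 f Rs (act2 (Smat * rot2 α) k) = nu k0 f Rt k)
    (hexu : ∃! p : ℝ × ℝ × ℝ, matchProp k0 f Rs Rt p)
    (φ θ ψ : ℝ) (hp : matchProp k0 f Rs Rt (φ, θ, ψ)) :
    Rs.transpose * Rt = Q3mat φ * Q2mat θ * Q3mat ψ :=
  reconstruction_euler_angles_general k0 hk0 f Rs Rt hRs hRt hexu φ θ ψ hp
end
end

section
/- Let k0 > 0, f : ℝ³ → ℝ be integrable with compact support, R : ℝ → SO(3) be continuously differentiable with angular velocity ω_t, and fix t ∈ ℝ. Suppose φ = (φ₁, φ₂) ∈ S¹₊ and ρ, ζ ∈ ℝ satisfy ∂_t ν̃_t(r·φ) = (k0·ρ + r·ζ) · ⟨∇ν̃_t(r·φ), (−φ₂, φ₁)⟩ for all r ∈ ℝ with |r| > k0; suppose φ is the unique element of S¹₊ for which real numbers with this property exist; and suppose the set { r ∈ ℝ : |r| > k0 and ⟨∇ν̃_t(r·φ), (−φ₂, φ₁)⟩ ≠ 0 } has at least two elements. Then ω_t = (ρ·φ₁, ρ·φ₂,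 ζ). -/
noncomputable section
open Real Set MeasureTheory
open scoped RealInnerProductSpace

/-- The half unit circle `S¹₊ = {(cos α, sin α) : α ∈ [0, π)}`. -/
def S1plus : Set R2 :=
  {v | ∃ α : ℝ, 0 ≤ α ∧ α < π ∧ v = (![Real.cos α, Real.sin α] : Fin 2 → ℝ)}

/-- Rotation of a planar vector by 90 degrees: `(φ₁, φ₂) ↦ (−φ₂, φ₁)`. -/
def rot90 (v : R2) : R2 := WithLp.toLp 2 (![-(v 1), v 0] : Fin 2 → ℝ)

/-- Inverse of `τ`: `τ⁻¹(y) = (2k0²/(k0² + ‖y‖²))·y`. -/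
def tauInv (k0 : ℝ) (y : R2) : R2 := (2 * k0 ^ 2 / (k0 ^ 2 + ‖y‖ ^ 2)) • y

/-- The transformed scaled squared energy `ν̃_R = ν_R ∘ τ⁻¹`. -/
def nuT (k0 : ℝ) (f : R3 → ℝ) (R : Mat3) (y : R2) : ℝ := nu k0 f R (tauInv k0 y)

/-!
On `‖y‖ > k0` the map `h ∘ τ⁻¹` is the inverse stereographic projection
`y ↦ c(y) • (y, -k0)` with `c(y) = 2k0² / (k0² + ‖y‖²)`; being a radial factor times a linear
map, its derivative in a direction `v ⊥ y` is `c(y) • (v, 0)`.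
Write `ω_t = (ρ' φ', ζ')` with `φ' ∈ S¹₊`. Then `ω_t × (rφ', -k0) = (k0 ρ' + r ζ') (φ'^⊥, 0)`,
and since `∂_t (R_t p) = R_t (ω_t × p)`, the chain rule turns the time derivative of `ν̃_t(rφ')`
into `(k0 ρ' + r ζ')` times its derivative in the direction `φ'^⊥`. So `(φ', ρ', ζ')` satisfies
the relation, uniqueness gives `φ' = φ`, and two radii where the gradient term does not vanish
pin down the affine function `r ↦ k0 ρ + r ζ`, i.e. `ρ = ρ'` and `ζ = ζ'`.
-/

namespace StereoReconstruction

open FourierTransform Topology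

section Radial

variable {E F : Type*} [NormedAddCommGroup E] [InnerProductSpace ℝ E]
  [NormedAddCommGroup F] [NormedSpace ℝ F] {a : ℝ → ℝ} {a' : ℝ} {u : E → F} {u' : E →L[ℝ] F}
  {y : E}

lemma hasFDerivAt_radial_smul (ha : HasDerivAt a a' (‖y‖ ^ 2)) (hu : HasFDerivAt u u' y) :
    HasFDerivAt (fun z => a (‖z‖ ^ 2) • u z)
      (a (‖y‖ ^ 2) • u' + ((2 * a') • innerSL ℝ y).smulRight (u y)) y := by
  have hnorm : HasFDerivAt (fun z => a (‖z‖ ^ 2)) ((2 * a') • innerSL ℝ y) y :=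
    (ha.comp_hasFDerivAt y (hasStrictFDerivAt_norm_sq y).hasFDerivAt).congr_fderiv
      (by ext; simp; ring)
  exact hnorm.smul hu

lemma fderiv_radial_smul_apply_of_inner_eq_zero (ha : DifferentiableAt ℝ a (‖y‖ ^ 2))
    (hu : HasFDerivAt u u' y) {v : E} (hyv : ⟪y, v⟫ = 0) :
    fderiv ℝ (fun z => a (‖z‖ ^ 2) • u z) y v = a (‖y‖ ^ 2) • u' v := by
  simp [(hasFDerivAt_radial_smul ha.hasDerivAt hu).fderiv, hyv]

end Radial

lemma integrable_norm_mul_norm_of_hasCompactSupport {X F : Type*} [NormedAddCommGroup X]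
    [MeasurableSpace X] [OpensMeasurableSpace X] [NormedAddCommGroup F] {μ : Measure X}
    {f : X → F} (hf : Integrable f μ) (hsupp : HasCompactSupport f) :
    Integrable (fun x => ‖x‖ * ‖f x‖) μ := by
  refine (integrableOn_iff_integrable_of_support_subset ?_).1
    (IntegrableOn.continuousOn_mul continuous_norm.continuousOn hf.norm.integrableOn hsupp)
  intro x hx
  refine subset_tsupport f fun hfx => hx ?_
  simp [hfx]

def planeEmbed : R2 →L[ℝ] R3 :=
  LinearMap.toContinuousLinearMap
    { toFun := fun v => WithLp.toLp 2 ![v 0, v 1, 0]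
      map_add' := fun v w => by ext i; fin_cases i <;> simp
      map_smul' := fun c v => by ext i; fin_cases i <;> simp }

lemma planeEmbed_apply (v : R2) : planeEmbed v = WithLp.toLp 2 ![v 0, v 1, 0] := rfl

lemma act3_eq_toEuclideanCLM (Q : Mat3) : act3 Q = Matrix.toEuclideanCLM (𝕜 := ℝ) Q := rfl

lemma act3_mul (A B : Mat3) (x : R3) : act3 (A * B) x = act3 A (act3 B x) := by
  simp [act3, Matrix.mulVec_mulVec]

lemma cross3_smul_right (w x : R3) (c : ℝ) : cross3 w (c • x) = c • cross3 w x := by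
  simp [cross3]

lemma cross3_planeEmbed_sub (k0 ρ ζ r : ℝ) (φ : R2) :
    cross3 (WithLp.toLp 2 ![ρ * φ 0, ρ * φ 1, ζ]) (planeEmbed (r • φ) - k0 • e3)
      = (k0 * ρ + r * ζ) • planeEmbed (rot90 φ) := by
  ext i
  fin_cases i <;> simp [cross3, planeEmbed_apply, e3, rot90, cross_apply] <;> ring

lemma hasDerivAt_act3 {R : ℝ → Mat3} {A : Mat3} {t : ℝ}
    (hR : ∀ i j, HasDerivAt (fun s => R s i j) (A i j) t) (p : R3) :
    HasDerivAt (fun s => act3 (R s) p) (act3 A p) t := by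
  have hmulVec : HasDerivAt (fun s => (R s).mulVec p.ofLp) (A.mulVec p.ofLp) t :=
    hasDerivAt_pi.2 fun i => by
      simp only [Matrix.mulVec, dotProduct]
      exact HasDerivAt.fun_sum fun j _ => (hR i j).mul_const _
  exact (PiLp.hasStrictFDerivAt_toLp 2 _).hasFDerivAt.comp_hasDerivAt t hmulVec

def stereo (k0 : ℝ) (y : R2) : R3 :=
  (2 * k0 ^ 2 / (k0 ^ 2 + ‖y‖ ^ 2)) • (planeEmbed y - k0 • e3)

lemma kappa_tauInv {k0 : ℝ} (hk0 : 0 < k0) {y : R2} (hy : k0 ≤ ‖y‖) :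
    kappa k0 (tauInv k0 y) = k0 * (‖y‖ ^ 2 - k0 ^ 2) / (k0 ^ 2 + ‖y‖ ^ 2) := by
  have hs : k0 ^ 2 ≤ ‖y‖ ^ 2 := pow_le_pow_left₀ hk0.le hy 2
  have hpos : 0 < k0 ^ 2 + ‖y‖ ^ 2 := by positivity
  rw [kappa, tauInv, norm_smul, mul_pow, Real.norm_eq_abs, sq_abs,
    ← Real.sqrt_sq (div_nonneg (mul_nonneg hk0.le (sub_nonneg.2 hs)) hpos.le)]
  congr 1
  field_simp
  ring

lemma hmap_tauInv_eq_stereo {k0 : ℝ} (hk0 : 0 < k0) {y : R2} (hy : k0 ≤ ‖y‖) :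
    hmap k0 (tauInv k0 y) = stereo k0 y := by
  have hpos : 0 < k0 ^ 2 + ‖y‖ ^ 2 := by positivity
  ext i
  fin_cases i
  · simp [hmap, tauInv, stereo, planeEmbed_apply, e3]
  · simp [hmap, tauInv, stereo, planeEmbed_apply, e3]
  · simp only [hmap, kappa_tauInv hk0 hy]
    simp [stereo, planeEmbed_apply, e3]
    field_simp
    ring

lemma differentiableAt_stereoFactor {k0 : ℝ} (hk0 : k0 ≠ 0) {s : ℝ} (hs : 0 ≤ s) :
    DifferentiableAt ℝ (fun s => 2 * k0 ^ 2 / (k0 ^ 2 + s)) s :=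
  (differentiableAt_const _).div (differentiableAt_id.const_add _) (by positivity)

lemma differentiableAt_stereo {k0 : ℝ} (hk0 : k0 ≠ 0) (y : R2) :
    DifferentiableAt ℝ (stereo k0) y :=
  (hasFDerivAt_radial_smul (differentiableAt_stereoFactor hk0 (by positivity)).hasDerivAt
    (planeEmbed.hasFDerivAt.sub_const _)).differentiableAt

lemma fderiv_stereo_apply_of_inner_eq_zero {k0 : ℝ} (hk0 : k0 ≠ 0) {y v : R2}
    (hyv : ⟪y, v⟫ = 0) :
    fderiv ℝ (stereo k0) y v = (2 * k0 ^ 2 / (k0 ^ 2 + ‖y‖ ^ 2)) • planeEmbed v :=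
  fderiv_radial_smul_apply_of_inner_eq_zero (differentiableAt_stereoFactor hk0 (by positivity))
    (planeEmbed.hasFDerivAt.sub_const _) hyv

lemma FT_eq_smul_fourier (f : R3 → ℝ) (y : R3) :
    FT f y = ((2 * π : ℝ) ^ (-(3 : ℝ) / 2) : ℝ) • 𝓕 (fun x => (f x : ℂ)) ((2 * π)⁻¹ • y) := by
  rw [Real.fourier_eq', FT, Complex.real_smul]
  congr 1
  refine integral_congr_ae (.of_forall fun x => ?_)
  have h : -2 * π * ((2 * π)⁻¹ * ⟪x, y⟫) = -⟪x, y⟫ := by field_simp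
  simp only [smul_eq_mul, real_inner_smul_right, h]
  push_cast
  ring_nf

lemma differentiable_FT {f : R3 → ℝ} (hf : Integrable f) (hsupp : HasCompactSupport f) :
    Differentiable ℝ (FT f) := by
  have hF : Differentiable ℝ (𝓕 fun x => (f x : ℂ)) :=
    Real.differentiable_fourier hf.ofReal
      (by simpa using integrable_norm_mul_norm_of_hasCompactSupport hf hsupp)
  rw [funext (FT_eq_smul_fourier f)]
  exact (hF.comp (differentiable_id.const_smul ((2 * π)⁻¹ : ℝ))).const_smul
    ((2 * π : ℝ) ^ (-(3 : ℝ) / 2) : ℝ)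

def fourierEnergy (f : R3 → ℝ) (x : R3) : ℝ := ‖FT f x‖ ^ 2

lemma differentiable_fourierEnergy {f : R3 → ℝ} (hf : Integrable f)
    (hsupp : HasCompactSupport f) : Differentiable ℝ (fourierEnergy f) :=
  (differentiable_FT hf hsupp).norm_sq ℝ

lemma nuT_eq_fourierEnergy_stereo {k0 : ℝ} (hk0 : 0 < k0) (f : R3 → ℝ) (Q : Mat3) {y : R2}
    (hy : k0 ≤ ‖y‖) : nuT k0 f Q y = fourierEnergy f (act3 Q (stereo k0 y)) := by
  rw [nuT, nu, hmap_tauInv_eq_stereo hk0 hy, fourierEnergy]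

lemma nuT_eventuallyEq_fourierEnergy_stereo {k0 : ℝ} (hk0 : 0 < k0) (f : R3 → ℝ) (Q : Mat3)
    {y : R2} (hy : k0 < ‖y‖) :
    nuT k0 f Q =ᶠ[𝓝 y] fun z => fourierEnergy f (act3 Q (stereo k0 z)) :=
  (continuous_norm.continuousAt.eventually_const_lt hy).mono fun _ hz =>
    nuT_eq_fourierEnergy_stereo hk0 f Q hz.le

lemma hasDerivAt_nuT {k0 : ℝ} (hk0 : 0 < k0) {f : R3 → ℝ}
    (hg : Differentiable ℝ (fourierEnergy f)) {R : ℝ → Mat3} {A : Mat3} {t : ℝ}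
    (hR : ∀ i j, HasDerivAt (fun s => R s i j) (A i j) t) {y : R2} (hy : k0 ≤ ‖y‖) :
    HasDerivAt (fun s => nuT k0 f (R s) y)
      (fderiv ℝ (fourierEnergy f) (act3 (R t) (stereo k0 y)) (act3 A (stereo k0 y))) t := by
  simp only [nuT_eq_fourierEnergy_stereo hk0 f _ hy]
  exact (hg _).hasFDerivAt.comp_hasDerivAt t (hasDerivAt_act3 hR _)

lemma inner_gradient_nuT {k0 : ℝ} (hk0 : 0 < k0) {f : R3 → ℝ}
    (hg : Differentiable ℝ (fourierEnergy f)) (Q : Mat3) {y v : R2} (hy : k0 < ‖y‖)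
    (hyv : ⟪y, v⟫ = 0) :
    ⟪gradient (nuT k0 f Q) y, v⟫ = fderiv ℝ (fourierEnergy f) (act3 Q (stereo k0 y))
      (act3 Q ((2 * k0 ^ 2 / (k0 ^ 2 + ‖y‖ ^ 2)) • planeEmbed v)) := by
  have hF : HasFDerivAt (fun z => fourierEnergy f (act3 Q (stereo k0 z)))
      ((fderiv ℝ (fourierEnergy f) (act3 Q (stereo k0 y))).comp
        ((Matrix.toEuclideanCLM (𝕜 := ℝ) Q).comp (fderiv ℝ (stereo k0) y))) y :=
    (hg _).hasFDerivAt.comp y ((Matrix.toEuclideanCLM (𝕜 := ℝ) Q).hasFDerivAt.comp y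
      (differentiableAt_stereo hk0.ne' y).hasFDerivAt)
  rw [inner_gradient_left,
    (hF.congr_of_eventuallyEq (nuT_eventuallyEq_fourierEnergy_stereo hk0 f Q hy)).fderiv]
  simp [fderiv_stereo_apply_of_inner_eq_zero hk0.ne' hyv, act3_eq_toEuclideanCLM]

lemma deriv_nuT_eq_mul_inner_gradient {k0 : ℝ} (hk0 : 0 < k0) {f : R3 → ℝ}
    (hf : Integrable f) (hsupp : HasCompactSupport f) {R : ℝ → Mat3} {A : Mat3} {t : ℝ}
    (hRt : (R t).transpose * R t = 1) (hR : ∀ i j, HasDerivAt (fun s => R s i j) (A i j) t)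
    {w : R3} (hw : ∀ x, act3 ((R t).transpose * A) x = cross3 w x) {y v : R2}
    (hy : k0 < ‖y‖) (hyv : ⟪y, v⟫ = 0) {c : ℝ}
    (hcross : cross3 w (planeEmbed y - k0 • e3) = c • planeEmbed v) :
    deriv (fun s => nuT k0 f (R s) y) t = c * ⟪gradient (nuT k0 f (R t)) y, v⟫ := by
  have hg := differentiable_fourierEnergy hf hsupp
  have hA : act3 A (stereo k0 y) = act3 (R t) (cross3 w (stereo k0 y)) := by
    rw [← hw, ← act3_mul, ← mul_assoc, mul_eq_one_comm.mp hRt, one_mul]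
  rw [(hasDerivAt_nuT hk0 hg hR hy.le).deriv, inner_gradient_nuT hk0 hg _ hy hyv, hA, stereo,
    cross3_smul_right, hcross]
  simp only [act3_eq_toEuclideanCLM, map_smul, smul_eq_mul]
  ring

lemma inner_rot90_self (φ : R2) : ⟪φ, rot90 φ⟫ = 0 := by
  simp [rot90, PiLp.inner_apply, Fin.sum_univ_two]
  ring

lemma deriv_nuT_smul_eq_mul_inner_gradient {k0 : ℝ} (hk0 : 0 < k0) {f : R3 → ℝ}
    (hf : Integrable f) (hsupp : HasCompactSupport f) {R : ℝ → Mat3} {A : Mat3} {t : ℝ}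
    (hRt : (R t).transpose * R t = 1) (hR : ∀ i j, HasDerivAt (fun s => R s i j) (A i j) t)
    {φ : R2} (hφ : ‖φ‖ = 1) {ρ ζ : ℝ}
    (hw : ∀ x, act3 ((R t).transpose * A) x = cross3 (WithLp.toLp 2 ![ρ * φ 0, ρ * φ 1, ζ]) x)
    (r : ℝ) (hr : k0 < |r|) :
    deriv (fun s => nuT k0 f (R s) (r • φ)) t
      = (k0 * ρ + r * ζ) * ⟪gradient (nuT k0 f (R t)) (r • φ), rot90 φ⟫ :=
  deriv_nuT_eq_mul_inner_gradient hk0 hf hsupp hRt hR hw (by simpa [norm_smul, hφ] using hr)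
    (by rw [real_inner_smul_left, inner_rot90_self, mul_zero]) (cross3_planeEmbed_sub k0 ρ ζ r φ)

lemma toLp_mem_S1plus {α : ℝ} (h0 : 0 ≤ α) (hπ : α < π) :
    WithLp.toLp 2 ![cos α, sin α] ∈ S1plus :=
  ⟨α, h0, hπ, rfl⟩

lemma norm_eq_one_of_mem_S1plus {φ : R2} (hφ : φ ∈ S1plus) : ‖φ‖ = 1 := by
  obtain ⟨α, -, -, hα⟩ := hφ
  simp [EuclideanSpace.norm_eq, Fin.sum_univ_two, hα]

lemma exists_mem_S1plus_mul (a b : ℝ) : ∃ φ ∈ S1plus, ∃ ρ : ℝ, a = ρ * φ 0 ∧ b = ρ * φ 1 := by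
  set z : ℂ := ⟨a, b⟩
  have hre : ‖z‖ * cos (Complex.arg z) = a := Complex.norm_mul_cos_arg z
  have him : ‖z‖ * sin (Complex.arg z) = b := Complex.norm_mul_sin_arg z
  -- `arg z ∈ (-π, π]` is folded into `[0, π)` by flipping the sign of `ρ`.
  obtain ⟨hlo, hhi⟩ := Complex.arg_mem_Ioc z
  rcases lt_or_ge (Complex.arg z) 0 with hneg | hnonneg
  · refine ⟨_, toLp_mem_S1plus (α := Complex.arg z + π) (by linarith) (by linarith), -‖z‖, ?_, ?_⟩
      <;> simp [Real.cos_add_pi, Real.sin_add_pi, ← hre, ← him]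
  rcases hhi.lt_or_eq with hlt | hpi
  · exact ⟨_, toLp_mem_S1plus hnonneg hlt, ‖z‖, by simp [← hre], by simp [← him]⟩
  · refine ⟨_, toLp_mem_S1plus le_rfl pi_pos, -‖z‖, ?_, ?_⟩ <;> simp [← hre, ← him, hpi]

lemma eq_and_eq_of_add_mul_eq_add_mul {a b a' b' r₁ r₂ : ℝ} (h₁ : a + r₁ * b = a' + r₁ * b')
    (h₂ : a + r₂ * b = a' + r₂ * b') (hr : r₁ ≠ r₂) : a = a' ∧ b = b' := by
  have hb : b = b' := by
    have : (r₁ - r₂) * (b - b') = 0 := by linear_combination h₁ - h₂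
    linarith [(mul_eq_zero.mp this).resolve_left (sub_ne_zero.mpr hr)]
  exact ⟨by subst hb; linarith, hb⟩

end StereoReconstruction

open StereoReconstruction

theorem reconstruction_angular_velocity_stereo_general (k0 : ℝ) (hk0 : 0 < k0) (f : R3 → ℝ)
    (hf : MeasureTheory.Integrable f) (hsupp : HasCompactSupport f)
    (R R' : ℝ → Mat3) (hSO : ∀ t, SO3 (R t))
    (hderiv : ∀ t i j, HasDerivAt (fun s => R s i j) (R' t i j) t)
    (ω : ℝ → R3)
    (hω : ∀ t (y : R3), act3 ((R t).transpose * R' t) y = cross3 (ω t) y)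
    (t : ℝ) (φ : R2) (ρ ζ : ℝ)
    (heq : ∀ r : ℝ, k0 < |r| →
      deriv (fun s => nuT k0 f (R s) (r • φ)) t
        = (k0 * ρ + r * ζ) * ⟪gradient (nuT k0 f (R t)) (r • φ), rot90 φ⟫)
    (huniq : ∀ φ' ∈ S1plus,
      (∃ ρ' ζ' : ℝ, ∀ r : ℝ, k0 < |r| →
        deriv (fun s => nuT k0 f (R s) (r • φ')) t
          = (k0 * ρ' + r * ζ') * ⟪gradient (nuT k0 f (R t)) (r • φ'), rot90 φ'⟫) → φ' = φ)
    (hset : Set.Nontrivial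
      {r : ℝ | k0 < |r| ∧ ⟪gradient (nuT k0 f (R t)) (r • φ), rot90 φ⟫ ≠ 0}) :
    ω t = (![ρ * φ 0, ρ * φ 1, ζ] : Fin 3 → ℝ) := by
  obtain ⟨φ', hφ'S, ρ', h0, h1⟩ := exists_mem_S1plus_mul (ω t 0) (ω t 1)
  have hωt : ω t = WithLp.toLp 2 ![ρ' * φ' 0, ρ' * φ' 1, ω t 2] := by
    ext i; fin_cases i <;> simp [h0, h1]
  have hrel := deriv_nuT_smul_eq_mul_inner_gradient hk0 hf hsupp (hSO t).1 (hderiv t)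
    (norm_eq_one_of_mem_S1plus hφ'S) (hωt ▸ hω t)
  obtain rfl : φ' = φ := huniq φ' hφ'S ⟨ρ', ω t 2, hrel⟩
  obtain ⟨r₁, ⟨hr₁, hg₁⟩, r₂, ⟨hr₂, hg₂⟩, hne⟩ := hset
  obtain ⟨hρ, hζ⟩ := eq_and_eq_of_add_mul_eq_add_mul
    (mul_right_cancel₀ hg₁ ((heq r₁ hr₁).symm.trans (hrel r₁ hr₁)))
    (mul_right_cancel₀ hg₂ ((heq r₂ hr₂).symm.trans (hrel r₂ hr₂))) hne
  rw [hωt, mul_left_cancel₀ hk0.ne' hρ, hζ]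

/-- Theorem: reconstruction of the angular velocity via the stereographic
version of the infinitesimal common circle method.  If `φ ∈ S¹₊` is the unique direction
for which parameters `ρ, ζ` with the transformed infinitesimal relation exist, and the set
`{ r : |r| > k0, ⟨∇ν̃_t(r φ), (−φ₂, φ₁)⟩ ≠ 0 }` has at least two elements, then
`ω_t = (ρ φ₁, ρ φ₂, ζ)`. -/
theorem reconstruction_angular_velocity_stereo (k0 : ℝ) (hk0 : 0 < k0) (f : R3 → ℝ)
    (hf : MeasureTheory.Integrable f) (hsupp : HasCompactSupport f)
    (R R' : ℝ → Mat3) (hSO : ∀ t, SO3 (R t))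
    (hderiv : ∀ t i j, HasDerivAt (fun s => R s i j) (R' t i j) t)
    (hcont : ∀ i j, Continuous fun t => R' t i j)
    (ω : ℝ → R3)
    (hω : ∀ t (y : R3), act3 ((R t).transpose * R' t) y = cross3 (ω t) y)
    (t : ℝ) (φ : R2) (hφ : φ ∈ S1plus) (ρ ζ : ℝ)
    (heq : ∀ r : ℝ, k0 < |r| →
      deriv (fun s => nuT k0 f (R s) (r • φ)) t
        = (k0 * ρ + r * ζ) * ⟪gradient (nuT k0 f (R t)) (r • φ), rot90 φ⟫)
    (huniq : ∀ φ' ∈ S1plus,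
      (∃ ρ' ζ' : ℝ, ∀ r : ℝ, k0 < |r| →
        deriv (fun s => nuT k0 f (R s) (r • φ')) t
          = (k0 * ρ' + r * ζ') * ⟪gradient (nuT k0 f (R t)) (r • φ'), rot90 φ'⟫) → φ' = φ)
    (hset : Set.Nontrivial
      {r : ℝ | k0 < |r| ∧ ⟪gradient (nuT k0 f (R t)) (r • φ), rot90 φ⟫ ≠ 0}) :
    ω t = (![ρ * φ 0, ρ * φ 1, ζ] : Fin 3 → ℝ) :=
  reconstruction_angular_velocity_stereo_general k0 hk0 f hf hsupp R R' hSO hderiv ω hω t φ ρ ζ heq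
    huniq hset
end
end
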